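/- The clone generated by binary AND, binary OR, and the binary function (x,y) ↦ x ⊕ y ⊕ 1 (i.e., (x,y) ↦ !(xor x y)) equals the clone generated by g₁ together with the constant function true, where g₁(x,y,z) = x ∧ (y ∨ ¬z): a Boolean function f : (Fin n → Bool) → Bool belongs to the first clone if and only if it belongs to the second. -/

import Mathlib

/-- The clone generated by a set `B` of Boolean functions: the smallest family containing all
projections and `B`, and closed under composition. -/
inductive InClone (B : (k : ℕ) → ((Fin k → Bool) → Bool) → Prop) :
    (n : ℕ) → ((Fin n → Bool) → Bool) → Prop
  | proj {n : ℕ} (i : Fin n) : InClone B n (fun x => x i)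
  | base {k : ℕ} {g : (Fin k → Bool) → Bool} (hg : B k g) : InClone B k g
  | comp {k n : ℕ} {g : (Fin k → Bool) → Bool} {h : Fin k → ((Fin n → Bool) → Bool)}
      (hg : InClone B k g) (hh : ∀ i, InClone B n (h i)) :
      InClone B n (fun x => g (fun i => h i x))

/-- g₁(x,y,z) = x ∧ (y ∨ ¬z). -/
def g1 : (Fin 3 → Bool) → Bool := fun x => x 0 && (x 1 || !x 2)

/-- The generating set {∧, ∨, x ⊕ y ⊕ 1}. -/
inductive XnorBase : (k : ℕ) → ((Fin k → Bool) → Bool) → Prop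
  | and : XnorBase 2 (fun x => x 0 && x 1)
  | or : XnorBase 2 (fun x => x 0 || x 1)
  | xnor : XnorBase 2 (fun x => !(xor (x 0) (x 1)))

/-- The generating set {g₁, 1}. -/
inductive G1OneBase : (k : ℕ) → ((Fin k → Bool) → Bool) → Prop
  | g1 : G1OneBase 3 g1
  | one : G1OneBase 1 (fun _ => true)

/-!
Two clones coincide once each generating set lies in the other clone. From `g₁` and `1` one gets
`x ∧ y = g₁(x, y, 1)` and `x → y = g₁(1, y, x)`, hence `x ∨ y = (x → y) → y` and
`x ↔ y = (x → y) ∧ (y → x)`. Conversely `1 = (x ↔ x)` and `g₁(x, y, z) = x ∧ (y ↔ (y ∨ z))`.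
-/

namespace InClone

variable {B : (k : ℕ) → ((Fin k → Bool) → Bool) → Prop} {n : ℕ}

theorem of_eq {f g : (Fin n → Bool) → Bool} (hf : InClone B n f) (hfg : f = g) :
    InClone B n g :=
  hfg ▸ hf

theorem mono {C : (k : ℕ) → ((Fin k → Bool) → Bool) → Prop}
    (hBC : ∀ k g, B k g → InClone C k g) {f : (Fin n → Bool) → Bool} (hf : InClone B n f) :
    InClone C n f := by
  induction hf with
  | proj i => exact .proj i
  | base hg => exact hBC _ _ hg
  | comp _ _ ihg ihh => exact .comp ihg ihh

theorem comp₁ {g : (Fin 1 → Bool) → Bool} {f₀ : (Fin n → Bool) → Bool}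
    (hg : InClone B 1 g) (h₀ : InClone B n f₀) : InClone B n fun x => g ![f₀ x] :=
  (comp hg (h := ![f₀]) fun i => by fin_cases i; exact h₀).of_eq <| by
    funext x; congr 1; funext i; fin_cases i; rfl

theorem comp₂ {g : (Fin 2 → Bool) → Bool} {f₀ f₁ : (Fin n → Bool) → Bool}
    (hg : InClone B 2 g) (h₀ : InClone B n f₀) (h₁ : InClone B n f₁) :
    InClone B n fun x => g ![f₀ x, f₁ x] :=
  (comp hg (h := ![f₀, f₁]) fun i => by fin_cases i <;> assumption).of_eq <| by
    funext x; congr 1; funext i; fin_cases i <;> rfl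

theorem comp₃ {g : (Fin 3 → Bool) → Bool} {f₀ f₁ f₂ : (Fin n → Bool) → Bool}
    (hg : InClone B 3 g) (h₀ : InClone B n f₀) (h₁ : InClone B n f₁) (h₂ : InClone B n f₂) :
    InClone B n fun x => g ![f₀ x, f₁ x, f₂ x] :=
  (comp hg (h := ![f₀, f₁, f₂]) fun i => by fin_cases i <;> assumption).of_eq <| by
    funext x; congr 1; funext i; fin_cases i <;> rfl

end InClone

open InClone

theorem inClone_xnorBase_true : InClone XnorBase 1 fun _ => true :=
  (comp₂ (.base XnorBase.xnor) (.proj 0) (.proj 0)).of_eq (by decide)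

theorem inClone_xnorBase_g1 : InClone XnorBase 3 g1 :=
  (comp₂ (.base XnorBase.and) (.proj 0)
    (comp₂ (.base XnorBase.xnor) (.proj 1)
      (comp₂ (.base XnorBase.or) (.proj 1) (.proj 2)))).of_eq (by decide)

theorem inClone_g1OneBase_true : InClone G1OneBase 2 fun _ => true :=
  comp₁ (.base G1OneBase.one) (.proj 0)

theorem inClone_g1OneBase_and : InClone G1OneBase 2 fun x => x 0 && x 1 :=
  (comp₃ (.base G1OneBase.g1) (.proj 0) (.proj 1) inClone_g1OneBase_true).of_eq (by decide)

theorem inClone_g1OneBase_imp : InClone G1OneBase 2 fun x => !x 0 || x 1 :=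
  (comp₃ (.base G1OneBase.g1) inClone_g1OneBase_true (.proj 1) (.proj 0)).of_eq (by decide)

theorem inClone_g1OneBase_or : InClone G1OneBase 2 fun x => x 0 || x 1 :=
  (comp₂ inClone_g1OneBase_imp inClone_g1OneBase_imp (.proj 1)).of_eq (by decide)

theorem inClone_g1OneBase_xnor : InClone G1OneBase 2 fun x => !(xor (x 0) (x 1)) :=
  (comp₂ inClone_g1OneBase_and inClone_g1OneBase_imp
    (comp₂ inClone_g1OneBase_imp (.proj 1) (.proj 0))).of_eq (by decide)

theorem XnorBase.inClone_g1OneBase {k : ℕ} {g : (Fin k → Bool) → Bool} (hg : XnorBase k g) :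
    InClone G1OneBase k g := by
  cases hg with
  | and => exact inClone_g1OneBase_and
  | or => exact inClone_g1OneBase_or
  | xnor => exact inClone_g1OneBase_xnor

theorem G1OneBase.inClone_xnorBase {k : ℕ} {g : (Fin k → Bool) → Bool} (hg : G1OneBase k g) :
    InClone XnorBase k g := by
  cases hg with
  | g1 => exact inClone_xnorBase_g1
  | one => exact inClone_xnorBase_true

/-- [∧, ∨, x ⊕ y ⊕ 1] = [g₁, 1]. -/
theorem clone_xnor_eq_clone_g1_one {n : ℕ} (f : (Fin n → Bool) → Bool) :
    InClone XnorBase n f ↔ InClone G1OneBase n f :=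
  ⟨mono fun _ _ => XnorBase.inClone_g1OneBase, mono fun _ _ => G1OneBase.inClone_xnorBase⟩
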